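/- arXiv:2509.09377 — 4 statements merged into one kernel-verified Lean document; each statement's English description precedes it below -/
import Mathlib

section
/- Let 1 ≤ p < ∞, let ρ be a bounded Borel measure on I = [0,1], and assume M_p(φ_σ) < ∞. Then there is a constant C > 0 such that for every g ∈ W^{1,∞}(I) (i.e. g and its weak derivative g' are essentially bounded on I) and every n ∈ ℕ, ‖S_n^ρ g − g‖_{L^p(I,ρ)} ≤ C ‖g'‖_∞ / n. -/
/-! Each coefficient `c_{n,k}` is a `φ_σ(n · - k) dρ`-weighted average of `g`, and `S_n^ρ g(x)` is
a `φ_σ(nx - k)`-weighted average of the `c_{n,k}`. Jensen's inequality for both averages, the lower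
bound `∑_k φ_σ(nx - k) ≥ φ_σ(1)` and `|g t - g x| ≤ (L/n) (|nt - k| + |nx - k|)` bound
`∫_I φ_σ(nx - k) |c_{n,k} - g x|^p dρ(x)` by `(2L/n)^p ∫_I |nt - k|^p φ_σ(nt - k) dρ(t)`; summed over
`k`, these node moments are at most `M_p(φ_σ) ρ(I)`. -/

open MeasureTheory Set Filter Topology

noncomputable section

/-- Kernel associated with a sigmoidal function: `φ_σ(x) = (σ(x+1) − σ(x−1))/2`. -/
def phiK (σ : ℝ → ℝ) (x : ℝ) : ℝ := (σ (x + 1) - σ (x - 1)) / 2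

/-- `σ` is a (non-decreasing) sigmoidal function. -/
def Sigmoidal (σ : ℝ → ℝ) : Prop :=
  Monotone σ ∧ Tendsto σ atBot (nhds 0) ∧ Tendsto σ atTop (nhds 1)

/-- Strict positivity of a measure on `I = [0,1]`. -/
def StrictlyPositive (ρ : Measure ℝ) : Prop :=
  ∀ A : Set ℝ, IsOpen A → (A ∩ Icc (0:ℝ) 1).Nonempty → 0 < ρ (A ∩ Icc (0:ℝ) 1)

/-- The coefficient `c_{n,k} = (∫₀¹ f(t) φ_σ(nt−k) dρ) / (∫₀¹ φ_σ(nt−k) dρ)`. -/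
def nnCoeff (ρ : Measure ℝ) (σ : ℝ → ℝ) (f : ℝ → ℝ) (n k : ℕ) : ℝ :=
  (∫ t in Icc (0:ℝ) 1, f t * phiK σ ((n : ℝ) * t - (k : ℝ)) ∂ρ) /
    ∫ t in Icc (0:ℝ) 1, phiK σ ((n : ℝ) * t - (k : ℝ)) ∂ρ

/-- The neural network operator `S_n^ρ f`. -/
def nnOp (ρ : Measure ℝ) (σ : ℝ → ℝ) (f : ℝ → ℝ) (n : ℕ) (x : ℝ) : ℝ :=
  (∑ k ∈ Finset.range (n + 1), nnCoeff ρ σ f n k * phiK σ ((n : ℝ) * x - (k : ℝ))) /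
    ∑ k ∈ Finset.range (n + 1), phiK σ ((n : ℝ) * x - (k : ℝ))

/-- Standard kernel properties: nonnegativity, `φ_σ(1) > 0`, partition of unity, and
`∑_{k=0}^n φ_σ(nx−k) ≥ φ_σ(1)` on `[0,1]`. -/
def KernelStd (σ : ℝ → ℝ) : Prop :=
  (∀ x, 0 ≤ phiK σ x) ∧ 0 < phiK σ 1 ∧
    (∀ x : ℝ, ∑' k : ℤ, phiK σ (x - (k : ℝ)) = 1) ∧
    ∀ n : ℕ, ∀ x ∈ Icc (0:ℝ) 1,
      phiK σ 1 ≤ ∑ k ∈ Finset.range (n + 1), phiK σ ((n : ℝ) * x - (k : ℝ))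

/-- `‖g‖_{L^p([0,1],ρ)} = (∫₀¹ |g|^p dρ)^{1/p}`. -/
def LpNorm1 (ρ : Measure ℝ) (p : ℝ) (g : ℝ → ℝ) : ℝ :=
  (∫ x in Icc (0:ℝ) 1, |g x| ^ p ∂ρ) ^ (1 / p)

/-- Finiteness of the `p`-th discrete absolute moment
`M_p(φ_σ) = sup_{x∈ℝ} ∑_{k∈ℤ} |x−k|^p φ_σ(x−k)`. -/
def MomentFin (σ : ℝ → ℝ) (p : ℝ) : Prop :=
  (⨆ x : ℝ, ∑' k : ℤ, ENNReal.ofReal (|x - (k : ℝ)| ^ p * phiK σ (x - (k : ℝ)))) < ⊤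

namespace Real

theorem rpow_add_le_mul_rpow_add_rpow {a b p : ℝ} (ha : 0 ≤ a) (hb : 0 ≤ b) (hp : 1 ≤ p) :
    (a + b) ^ p ≤ 2 ^ (p - 1) * (a ^ p + b ^ p) := by
  lift a to NNReal using ha
  lift b to NNReal using hb
  exact_mod_cast NNReal.rpow_add_le_mul_rpow_add_rpow a b hp

theorem rpow_add_mul_rpow_sub_one_mul_sub_le {a y p : ℝ} (ha : 0 < a) (hy : 0 ≤ y)
    (hp : 1 ≤ p) : a ^ p + p * a ^ (p - 1) * (y - a) ≤ y ^ p := by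
  have hap : 0 < a ^ p := rpow_pos_of_pos ha p
  have bernoulli := one_add_mul_self_le_rpow_one_add (s := y / a - 1)
    (by linarith [div_nonneg hy ha.le]) hp
  rw [add_sub_cancel, div_rpow hy ha.le, le_div_iff₀ hap] at bernoulli
  calc a ^ p + p * a ^ (p - 1) * (y - a) = (1 + p * (y / a - 1)) * a ^ p := by
        rw [rpow_sub_one ha.ne']
        field_simp
    _ ≤ y ^ p := bernoulli

end Real

theorem abs_sum_mul_div_sum_sub_rpow_le {ι : Type*} (s : Finset ι) {w c : ι → ℝ}
    (hw : ∀ i ∈ s, 0 ≤ w i) (hW : 0 < ∑ i ∈ s, w i) (y : ℝ) {p : ℝ} (hp : 1 ≤ p) :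
    |(∑ i ∈ s, c i * w i) / (∑ i ∈ s, w i) - y| ^ p ≤
      (∑ i ∈ s, |c i - y| ^ p * w i) / ∑ i ∈ s, w i := by
  have hshift : (∑ i ∈ s, c i * w i) / (∑ i ∈ s, w i) - y =
      (∑ i ∈ s, (c i - y) * w i) / ∑ i ∈ s, w i := by
    simp only [sub_mul, Finset.sum_sub_distrib, ← Finset.mul_sum]
    field_simp
  have htriangle : |(∑ i ∈ s, (c i - y) * w i) / ∑ i ∈ s, w i| ≤
      s.centerMass w (fun i => |c i - y|) := by
    rw [Finset.centerMass, abs_div, abs_of_pos hW, smul_eq_mul, inv_mul_eq_div]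
    gcongr
    refine (Finset.abs_sum_le_sum_abs _ _).trans_eq (Finset.sum_congr rfl fun i hi => ?_)
    rw [abs_mul, abs_of_nonneg (hw i hi), smul_eq_mul, mul_comm]
  have jensen := (convexOn_rpow hp).map_centerMass_le hw hW (fun i _ => abs_nonneg (c i - y))
  calc |(∑ i ∈ s, c i * w i) / (∑ i ∈ s, w i) - y| ^ p
      ≤ (s.centerMass w fun i => |c i - y|) ^ p := by
        rw [hshift]
        exact Real.rpow_le_rpow (abs_nonneg _) htriangle (by linarith)
    _ ≤ _ := jensen
    _ = _ := by
        simp only [Finset.centerMass, Function.comp_def, smul_eq_mul, inv_mul_eq_div]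
        simp_rw [mul_comm (w _)]

theorem abs_integral_mul_div_integral_sub_rpow_le {α : Type*} [MeasurableSpace α]
    {μ : Measure α} {h w : α → ℝ} (hw : 0 ≤ᵐ[μ] w) (hwi : Integrable w μ)
    (hhw : Integrable (fun t => h t * w t) μ) (hW : 0 < ∫ t, w t ∂μ) (y : ℝ) {p : ℝ}
    (hp : 1 ≤ p) (hpi : Integrable (fun t => |h t - y| ^ p * w t) μ) :
    |(∫ t, h t * w t ∂μ) / (∫ t, w t ∂μ) - y| ^ p ≤
      (∫ t, |h t - y| ^ p * w t ∂μ) / ∫ t, w t ∂μ := by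
  set W := ∫ t, w t ∂μ with hW_def
  have hsub : Integrable (fun t => (h t - y) * w t) μ :=
    (hhw.sub (hwi.const_mul y)).congr (ae_of_all _ fun t => (sub_mul _ _ _).symm)
  have habs : Integrable (fun t => |h t - y| * w t) μ := by
    refine hsub.norm.congr ?_
    filter_upwards [hw] with t ht
    rw [Real.norm_eq_abs, abs_mul, abs_of_nonneg ht]
  set a := (∫ t, |h t - y| * w t ∂μ) / W
  have ha : 0 ≤ a := div_nonneg (integral_nonneg_of_ae (by
    filter_upwards [hw] with t ht using mul_nonneg (abs_nonneg _) ht)) hW.le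
  have htriangle : |(∫ t, h t * w t ∂μ) / W - y| ≤ a := by
    have hshift : (∫ t, h t * w t ∂μ) / W - y = (∫ t, (h t - y) * w t ∂μ) / W := by
      simp only [sub_mul]
      rw [integral_sub hhw (hwi.const_mul y), integral_const_mul, ← hW_def]
      field_simp
    rw [hshift, abs_div, abs_of_pos hW]
    refine div_le_div_of_nonneg_right ?_ hW.le
    refine (abs_integral_le_integral_abs).trans_eq (integral_congr_ae ?_)
    filter_upwards [hw] with t ht
    rw [abs_mul, abs_of_nonneg ht]
  have hjensen : a ^ p ≤ (∫ t, |h t - y| ^ p * w t ∂μ) / W := by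
    rcases ha.eq_or_lt with ha0 | ha0
    · rw [← ha0, Real.zero_rpow (by linarith)]
      exact div_nonneg (integral_nonneg_of_ae (by
        filter_upwards [hw] with t ht using mul_nonneg (by positivity) ht)) hW.le
    -- integrate the tangent line of `z ↦ z ^ p` at `a` against `w`
    set c := p * a ^ (p - 1)
    have hexpand : (fun t => (a ^ p + c * (|h t - y| - a)) * w t) =
        fun t => (a ^ p - c * a) * w t + c * (|h t - y| * w t) := by
      funext t; ring
    have htangent : ∫ t, (a ^ p + c * (|h t - y| - a)) * w t ∂μ = a ^ p * W := by
      rw [hexpand, integral_add (hwi.const_mul _) (habs.const_mul _), integral_const_mul,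
        integral_const_mul, show ∫ t, |h t - y| * w t ∂μ = a * W by
          simp only [a]; field_simp]
      ring
    rw [le_div_iff₀ hW, ← htangent]
    refine integral_mono_ae (hexpand ▸ (hwi.const_mul _).add (habs.const_mul _)) hpi ?_
    filter_upwards [hw] with t ht
    exact mul_le_mul_of_nonneg_right
      (Real.rpow_add_mul_rpow_sub_one_mul_sub_le ha0 (abs_nonneg _) hp) ht
  calc |(∫ t, h t * w t ∂μ) / W - y| ^ p ≤ a ^ p :=
        Real.rpow_le_rpow (abs_nonneg _) htriangle (by linarith)
    _ ≤ _ := hjensen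

theorem Sigmoidal.phiK_nonneg {σ : ℝ → ℝ} (hσ : Sigmoidal σ) (x : ℝ) : 0 ≤ phiK σ x := by
  have := hσ.1 (show x - 1 ≤ x + 1 by linarith)
  unfold phiK
  linarith

theorem Sigmoidal.phiK_le_one {σ : ℝ → ℝ} (hσ : Sigmoidal σ) (x : ℝ) : phiK σ x ≤ 1 := by
  have h0 := hσ.1.le_of_tendsto hσ.2.1 (x - 1)
  have h1 := hσ.1.ge_of_tendsto hσ.2.2 (x + 1)
  unfold phiK
  linarith

theorem Sigmoidal.measurable_phiK {σ : ℝ → ℝ} (hσ : Sigmoidal σ) : Measurable (phiK σ) := by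
  have := hσ.1.measurable
  unfold phiK
  fun_prop

theorem Sigmoidal.integrable_phiK_comp {σ : ℝ → ℝ} (hσ : Sigmoidal σ) {μ : Measure ℝ}
    [IsFiniteMeasure μ] (a b : ℝ) : Integrable (fun t => phiK σ (a * t - b)) μ := by
  refine Integrable.of_bound (hσ.measurable_phiK.comp (by fun_prop)).aestronglyMeasurable 1
    (ae_of_all _ fun t => ?_)
  rw [Real.norm_eq_abs, abs_of_nonneg (hσ.phiK_nonneg _)]
  exact hσ.phiK_le_one _

/-- The quantity `M_p(φ_σ)` whose finiteness is `MomentFin σ p`. -/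
def absMoment (σ : ℝ → ℝ) (p : ℝ) : ENNReal :=
  ⨆ x : ℝ, ∑' k : ℤ, ENNReal.ofReal (|x - (k : ℝ)| ^ p * phiK σ (x - (k : ℝ)))

theorem sum_rpow_abs_sub_mul_phiK_le_absMoment {σ : ℝ → ℝ} (hσ : Sigmoidal σ) {p : ℝ}
    (hM : MomentFin σ p) (u : ℝ) (s : Finset ℕ) :
    ∑ k ∈ s, |u - k| ^ p * phiK σ (u - k) ≤ (absMoment σ p).toReal := by
  have hM' : absMoment σ p < ⊤ := hM
  rw [← ENNReal.ofReal_le_iff_le_toReal hM'.ne,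
    ENNReal.ofReal_sum_of_nonneg fun k _ => mul_nonneg (by positivity) (hσ.phiK_nonneg _)]
  calc ∑ k ∈ s, ENNReal.ofReal (|u - k| ^ p * phiK σ (u - k))
      = ∑ k ∈ s.map Nat.castEmbedding,
          ENNReal.ofReal (|u - (k : ℤ)| ^ p * phiK σ (u - (k : ℤ))) := by
        simp [Finset.sum_map]
    _ ≤ ∑' k : ℤ, ENNReal.ofReal (|u - k| ^ p * phiK σ (u - k)) := ENNReal.sum_le_tsum _
    _ ≤ absMoment σ p :=
        le_iSup (fun x : ℝ => ∑' k : ℤ, ENNReal.ofReal (|x - k| ^ p * phiK σ (x - k))) u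

theorem Sigmoidal.integrable_rpow_abs_mul_phiK_comp {σ : ℝ → ℝ} (hσ : Sigmoidal σ) {p : ℝ}
    (hM : MomentFin σ p) {μ : Measure ℝ} [IsFiniteMeasure μ] (a b : ℝ) :
    Integrable (fun t => |a * t - b| ^ p * phiK σ (a * t - b)) μ := by
  have := hσ.measurable_phiK
  refine Integrable.of_bound (by fun_prop) (absMoment σ p).toReal (ae_of_all _ fun t => ?_)
  rw [Real.norm_eq_abs, abs_of_nonneg (mul_nonneg (by positivity) (hσ.phiK_nonneg _))]
  simpa using sum_rpow_abs_sub_mul_phiK_le_absMoment hσ hM (a * t - b) {0}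

section Operator

variable {σ : ℝ → ℝ} {ρ : Measure ℝ} {p : ℝ} {g : ℝ → ℝ} {L : ℝ}

theorem aestronglyMeasurable_of_lipschitz
    (hg : ∀ x ∈ Icc (0:ℝ) 1, ∀ t ∈ Icc (0:ℝ) 1, |g t - g x| ≤ L * |t - x|) :
    AEStronglyMeasurable g (ρ.restrict (Icc 0 1)) :=
  (LipschitzOnWith.of_dist_le' fun x hx t ht => by
    simpa only [Real.dist_eq] using hg t ht x hx).continuousOn.aestronglyMeasurable
    measurableSet_Icc

theorem abs_sub_le_of_lipschitz (hL : 0 ≤ L)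
    (hg : ∀ x ∈ Icc (0:ℝ) 1, ∀ t ∈ Icc (0:ℝ) 1, |g t - g x| ≤ L * |t - x|)
    {x t : ℝ} (hx : x ∈ Icc (0:ℝ) 1) (ht : t ∈ Icc (0:ℝ) 1) : |g t - g x| ≤ L :=
  (hg x hx t ht).trans (mul_le_of_le_one_right hL
    (abs_sub_le_iff.2 ⟨by linarith [ht.2, hx.1], by linarith [ht.1, hx.2]⟩))

theorem integrable_mul_phiK_comp [IsFiniteMeasure ρ] (hσ : Sigmoidal σ) (hL : 0 ≤ L)
    (hg : ∀ x ∈ Icc (0:ℝ) 1, ∀ t ∈ Icc (0:ℝ) 1, |g t - g x| ≤ L * |t - x|) (a b : ℝ) :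
    Integrable (fun t => g t * phiK σ (a * t - b)) (ρ.restrict (Icc 0 1)) := by
  refine Integrable.of_bound ((aestronglyMeasurable_of_lipschitz hg).mul
    (hσ.measurable_phiK.comp (by fun_prop)).aestronglyMeasurable) (|g 0| + L) ?_
  filter_upwards [ae_restrict_mem measurableSet_Icc] with t ht
  have hgt := abs_sub_le_of_lipschitz hL hg ⟨le_rfl, zero_le_one⟩ ht
  rw [Real.norm_eq_abs, abs_mul, abs_of_nonneg (hσ.phiK_nonneg _)]
  calc |g t| * phiK σ (a * t - b) ≤ (|g 0| + L) * 1 :=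
        mul_le_mul (by linarith [abs_sub_abs_le_abs_sub (g t) (g 0)]) (hσ.phiK_le_one _)
          (hσ.phiK_nonneg _) (by positivity)
    _ = |g 0| + L := mul_one _

theorem integrable_rpow_abs_sub_mul_phiK_comp [IsFiniteMeasure ρ] (hσ : Sigmoidal σ) (hL : 0 ≤ L)
    (hg : ∀ x ∈ Icc (0:ℝ) 1, ∀ t ∈ Icc (0:ℝ) 1, |g t - g x| ≤ L * |t - x|) (hp : 0 ≤ p)
    (y a b : ℝ) :
    Integrable (fun t => |g t - y| ^ p * phiK σ (a * t - b)) (ρ.restrict (Icc 0 1)) := by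
  have hgm := (aestronglyMeasurable_of_lipschitz (ρ := ρ) hg).aemeasurable
  have := hσ.measurable_phiK
  refine Integrable.of_bound (by fun_prop) ((L + |g 0 - y|) ^ p) ?_
  filter_upwards [ae_restrict_mem measurableSet_Icc] with t ht
  have hgt := abs_sub_le_of_lipschitz hL hg ⟨le_rfl, zero_le_one⟩ ht
  rw [Real.norm_eq_abs, abs_of_nonneg (mul_nonneg (by positivity) (hσ.phiK_nonneg _))]
  calc |g t - y| ^ p * phiK σ (a * t - b) ≤ (L + |g 0 - y|) ^ p * 1 :=
        mul_le_mul (by gcongr; exact (abs_sub_le _ _ _).trans (by linarith))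
          (hσ.phiK_le_one _) (hσ.phiK_nonneg _) (by positivity)
    _ = (L + |g 0 - y|) ^ p := mul_one _

theorem rpow_abs_sub_le_of_lipschitz (hL : 0 ≤ L)
    (hg : ∀ x ∈ Icc (0:ℝ) 1, ∀ t ∈ Icc (0:ℝ) 1, |g t - g x| ≤ L * |t - x|) (hp : 1 ≤ p)
    {n : ℕ} (hn : 0 < n) {x t : ℝ} (hx : x ∈ Icc (0:ℝ) 1) (ht : t ∈ Icc (0:ℝ) 1) (k : ℝ) :
    |g t - g x| ^ p ≤ 2 ^ (p - 1) * (L / n) ^ p * (|n * t - k| ^ p + |n * x - k| ^ p) := by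
  have hn' : (0:ℝ) < n := by exact_mod_cast hn
  have hsplit : |g t - g x| ≤ L / n * (|n * t - k| + |n * x - k|) :=
    calc |g t - g x| ≤ L * |t - x| := hg x hx t ht
      _ = L / n * |n * t - n * x| := by
          rw [← mul_sub, abs_mul, abs_of_pos hn']
          field_simp
      _ ≤ L / n * (|n * t - k| + |n * x - k|) := by
          gcongr
          exact (abs_sub_le _ _ _).trans_eq (by rw [abs_sub_comm k])
  calc |g t - g x| ^ p ≤ (L / n * (|n * t - k| + |n * x - k|)) ^ p :=
        Real.rpow_le_rpow (abs_nonneg _) hsplit (by linarith)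
    _ = (L / n) ^ p * (|n * t - k| + |n * x - k|) ^ p :=
        Real.mul_rpow (by positivity) (by positivity)
    _ ≤ (L / n) ^ p * (2 ^ (p - 1) * (|n * t - k| ^ p + |n * x - k| ^ p)) := by
        gcongr
        exact Real.rpow_add_le_mul_rpow_add_rpow (abs_nonneg _) (abs_nonneg _) hp
    _ = _ := by ring

def nodeMoment (ρ : Measure ℝ) (σ : ℝ → ℝ) (p : ℝ) (n k : ℕ) : ℝ :=
  ∫ t in Icc (0:ℝ) 1, |(n : ℝ) * t - k| ^ p * phiK σ (n * t - k) ∂ρ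

theorem rpow_abs_nnCoeff_sub_le [IsFiniteMeasure ρ] (hσ : Sigmoidal σ) (hM : MomentFin σ p)
    (hL : 0 ≤ L) (hg : ∀ x ∈ Icc (0:ℝ) 1, ∀ t ∈ Icc (0:ℝ) 1, |g t - g x| ≤ L * |t - x|)
    (hp : 1 ≤ p) {n k : ℕ} (hn : 0 < n)
    (hk : 0 < ∫ t in Icc (0:ℝ) 1, phiK σ (n * t - k) ∂ρ) {x : ℝ} (hx : x ∈ Icc (0:ℝ) 1) :
    |nnCoeff ρ σ g n k - g x| ^ p ≤ 2 ^ (p - 1) * (L / n) ^ p *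
      (nodeMoment ρ σ p n k / (∫ t in Icc (0:ℝ) 1, phiK σ (n * t - k) ∂ρ) + |n * x - k| ^ p) := by
  set D := ∫ t in Icc (0:ℝ) 1, phiK σ (n * t - k) ∂ρ
  set c := 2 ^ (p - 1) * (L / n) ^ p
  have hφ := hσ.integrable_phiK_comp (μ := ρ.restrict (Icc 0 1)) n k
  have hmoment := hσ.integrable_rpow_abs_mul_phiK_comp hM (μ := ρ.restrict (Icc 0 1)) n k
  have jensen := abs_integral_mul_div_integral_sub_rpow_le
    (ae_of_all _ fun t => hσ.phiK_nonneg _) hφ (integrable_mul_phiK_comp hσ hL hg n k) hk (g x)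
    hp (integrable_rpow_abs_sub_mul_phiK_comp hσ hL hg (by linarith) (g x) n k)
  have hlip : ∫ t in Icc (0:ℝ) 1, |g t - g x| ^ p * phiK σ (n * t - k) ∂ρ ≤
      ∫ t in Icc (0:ℝ) 1, c * (|n * t - k| ^ p * phiK σ (n * t - k) +
        |n * x - k| ^ p * phiK σ (n * t - k)) ∂ρ := by
    refine setIntegral_mono_on (integrable_rpow_abs_sub_mul_phiK_comp hσ hL hg (by linarith) _ _ _)
      ((hmoment.add (hφ.const_mul _)).const_mul c) measurableSet_Icc fun t ht => ?_
    calc |g t - g x| ^ p * phiK σ (n * t - k)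
        ≤ c * (|n * t - k| ^ p + |n * x - k| ^ p) * phiK σ (n * t - k) :=
          mul_le_mul_of_nonneg_right (rpow_abs_sub_le_of_lipschitz hL hg hp hn hx ht k)
            (hσ.phiK_nonneg _)
      _ = _ := by ring
  rw [integral_const_mul, integral_add hmoment (hφ.const_mul _), integral_const_mul] at hlip
  calc |nnCoeff ρ σ g n k - g x| ^ p
      ≤ (∫ t in Icc (0:ℝ) 1, |g t - g x| ^ p * phiK σ (n * t - k) ∂ρ) / D := jensen
    _ ≤ c * (nodeMoment ρ σ p n k + |n * x - k| ^ p * D) / D :=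
        div_le_div_of_nonneg_right hlip hk.le
    _ = _ := by field_simp

theorem integrable_rpow_abs_nnCoeff_sub_mul_phiK [IsFiniteMeasure ρ] (hσ : Sigmoidal σ)
    (hL : 0 ≤ L) (hg : ∀ x ∈ Icc (0:ℝ) 1, ∀ t ∈ Icc (0:ℝ) 1, |g t - g x| ≤ L * |t - x|)
    (hp : 0 ≤ p) (n k : ℕ) :
    Integrable (fun x => |nnCoeff ρ σ g n k - g x| ^ p * phiK σ (n * x - k))
      (ρ.restrict (Icc 0 1)) := by
  simpa only [abs_sub_comm] using
    integrable_rpow_abs_sub_mul_phiK_comp hσ hL hg hp (nnCoeff ρ σ g n k) n k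

theorem integral_rpow_abs_nnCoeff_sub_mul_phiK_le [IsFiniteMeasure ρ] (hσ : Sigmoidal σ)
    (hM : MomentFin σ p) (hL : 0 ≤ L)
    (hg : ∀ x ∈ Icc (0:ℝ) 1, ∀ t ∈ Icc (0:ℝ) 1, |g t - g x| ≤ L * |t - x|)
    (hp : 1 ≤ p) {n : ℕ} (hn : 0 < n) (k : ℕ) :
    ∫ x in Icc (0:ℝ) 1, |nnCoeff ρ σ g n k - g x| ^ p * phiK σ (n * x - k) ∂ρ ≤
      2 ^ p * (L / n) ^ p * nodeMoment ρ σ p n k := by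
  have hφ := hσ.integrable_phiK_comp (μ := ρ.restrict (Icc 0 1)) n k
  have hmoment_nonneg : 0 ≤ nodeMoment ρ σ p n k :=
    integral_nonneg fun t => mul_nonneg (by positivity) (hσ.phiK_nonneg _)
  rcases (integral_nonneg fun t => hσ.phiK_nonneg (n * t - k) :
    0 ≤ ∫ t in Icc (0:ℝ) 1, phiK σ (n * t - k) ∂ρ).eq_or_lt with hD | hD
  · -- `nnCoeff` is `0 / 0` here, but the kernel of this node vanishes `ρ`-a.e. on `I`
    have hvanish := (integral_eq_zero_iff_of_nonneg (fun t => hσ.phiK_nonneg _) hφ).1 hD.symm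
    rw [integral_eq_zero_of_ae (by filter_upwards [hvanish] with x hx; simp [hx])]
    positivity
  set D := ∫ t in Icc (0:ℝ) 1, phiK σ (n * t - k) ∂ρ
  set c := 2 ^ (p - 1) * (L / n) ^ p with hc
  have hmoment := hσ.integrable_rpow_abs_mul_phiK_comp hM (μ := ρ.restrict (Icc 0 1)) n k
  calc ∫ x in Icc (0:ℝ) 1, |nnCoeff ρ σ g n k - g x| ^ p * phiK σ (n * x - k) ∂ρ
      ≤ ∫ x in Icc (0:ℝ) 1, c * (nodeMoment ρ σ p n k / D * phiK σ (n * x - k) +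
          |n * x - k| ^ p * phiK σ (n * x - k)) ∂ρ := by
        refine setIntegral_mono_on
          (integrable_rpow_abs_nnCoeff_sub_mul_phiK hσ hL hg (by linarith) n k)
          (((hφ.const_mul _).add hmoment).const_mul c) measurableSet_Icc fun x hx => ?_
        calc |nnCoeff ρ σ g n k - g x| ^ p * phiK σ (n * x - k)
            ≤ c * (nodeMoment ρ σ p n k / D + |n * x - k| ^ p) * phiK σ (n * x - k) :=
              mul_le_mul_of_nonneg_right (rpow_abs_nnCoeff_sub_le hσ hM hL hg hp hn hD hx)
                (hσ.phiK_nonneg _)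
          _ = _ := by ring
    _ = c * (nodeMoment ρ σ p n k / D * D + nodeMoment ρ σ p n k) := by
        rw [integral_const_mul, integral_add (hφ.const_mul _) hmoment, integral_const_mul]
        rfl
    _ = 2 ^ p * (L / n) ^ p * nodeMoment ρ σ p n k := by
        rw [div_mul_cancel₀ _ hD.ne', hc, Real.rpow_sub_one two_ne_zero]
        ring

theorem sum_nodeMoment_le [IsFiniteMeasure ρ] (hσ : Sigmoidal σ) (hM : MomentFin σ p) (n : ℕ) :
    ∑ k ∈ Finset.range (n + 1), nodeMoment ρ σ p n k ≤
      (absMoment σ p).toReal * ρ.real (Icc 0 1) := by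
  calc ∑ k ∈ Finset.range (n + 1), nodeMoment ρ σ p n k
      = ∫ x in Icc (0:ℝ) 1, ∑ k ∈ Finset.range (n + 1),
          |(n : ℝ) * x - k| ^ p * phiK σ (n * x - k) ∂ρ :=
        (integral_finsetSum _ fun k _ => hσ.integrable_rpow_abs_mul_phiK_comp hM _ _).symm
    _ ≤ ∫ _ in Icc (0:ℝ) 1, (absMoment σ p).toReal ∂ρ :=
        integral_mono_of_nonneg
          (ae_of_all _ fun x => Finset.sum_nonneg fun k _ =>
            mul_nonneg (by positivity) (hσ.phiK_nonneg _))
          (integrable_const _)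
          (ae_of_all _ fun x => sum_rpow_abs_sub_mul_phiK_le_absMoment hσ hM (n * x) _)
    _ = _ := by rw [setIntegral_const, smul_eq_mul, mul_comm]

theorem rpow_abs_nnOp_sub_le (hker : KernelStd σ) (hp : 1 ≤ p) (n : ℕ) {x : ℝ}
    (hx : x ∈ Icc (0:ℝ) 1) :
    |nnOp ρ σ g n x - g x| ^ p ≤
      (∑ k ∈ Finset.range (n + 1), |nnCoeff ρ σ g n k - g x| ^ p * phiK σ (n * x - k)) /
        phiK σ 1 := by
  obtain ⟨hφ0, hm, -, hmass⟩ := hker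
  exact (abs_sum_mul_div_sum_sub_rpow_le _ (fun k _ => hφ0 _) (hm.trans_le (hmass n x hx))
    (g x) hp).trans (div_le_div_of_nonneg_left
      (Finset.sum_nonneg fun k _ => mul_nonneg (by positivity) (hφ0 _)) hm (hmass n x hx))

theorem integral_rpow_abs_nnOp_sub_le [IsFiniteMeasure ρ] (hσ : Sigmoidal σ)
    (hker : KernelStd σ) (hM : MomentFin σ p) (hL : 0 ≤ L)
    (hg : ∀ x ∈ Icc (0:ℝ) 1, ∀ t ∈ Icc (0:ℝ) 1, |g t - g x| ≤ L * |t - x|)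
    (hp : 1 ≤ p) {n : ℕ} (hn : 0 < n) :
    ∫ x in Icc (0:ℝ) 1, |nnOp ρ σ g n x - g x| ^ p ∂ρ ≤
      (L / n) ^ p * (2 ^ p * (absMoment σ p).toReal * ρ.real (Icc 0 1) / phiK σ 1) := by
  have hm : 0 < phiK σ 1 := hker.2.1
  have hint := fun k (_ : k ∈ Finset.range (n + 1)) =>
    integrable_rpow_abs_nnCoeff_sub_mul_phiK (ρ := ρ) (p := p) hσ hL hg (by linarith) n k
  calc ∫ x in Icc (0:ℝ) 1, |nnOp ρ σ g n x - g x| ^ p ∂ρ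
      ≤ ∫ x in Icc (0:ℝ) 1, (∑ k ∈ Finset.range (n + 1),
          |nnCoeff ρ σ g n k - g x| ^ p * phiK σ (n * x - k)) / phiK σ 1 ∂ρ :=
        integral_mono_of_nonneg (ae_of_all _ fun x => by positivity)
          ((integrable_finsetSum _ hint).div_const _)
          ((ae_restrict_mem measurableSet_Icc).mono fun x hx => rpow_abs_nnOp_sub_le hker hp n hx)
    _ = (∑ k ∈ Finset.range (n + 1), ∫ x in Icc (0:ℝ) 1,
          |nnCoeff ρ σ g n k - g x| ^ p * phiK σ (n * x - k) ∂ρ) / phiK σ 1 := by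
        rw [integral_div, integral_finsetSum _ hint]
    _ ≤ (∑ k ∈ Finset.range (n + 1), 2 ^ p * (L / n) ^ p * nodeMoment ρ σ p n k) / phiK σ 1 :=
        div_le_div_of_nonneg_right (Finset.sum_le_sum fun k _ =>
          integral_rpow_abs_nnCoeff_sub_mul_phiK_le hσ hM hL hg hp hn k) hm.le
    _ ≤ 2 ^ p * (L / n) ^ p * ((absMoment σ p).toReal * ρ.real (Icc 0 1)) / phiK σ 1 := by
        rw [← Finset.mul_sum]
        gcongr
        exact sum_nodeMoment_le hσ hM n
    _ = _ := by ring

end Operator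

/-- if `M_p(φ_σ) < ∞`, there is `C > 0` such that for every
`g ∈ W^{1,∞}(I)` (i.e. `|g(t) − g(x)| ≤ ‖g'‖_∞ |t − x|` on `[0,1]`, with `L = ‖g'‖_∞`)
and every `n`, `‖S_n^ρ g − g‖_{L^p(I,ρ)} ≤ C L / n`. -/
theorem statement6 (σ : ℝ → ℝ) (hσ : Sigmoidal σ) (hker : KernelStd σ)
    (ρ : Measure ℝ) [IsFiniteMeasure ρ]
    (p : ℝ) (hp : 1 ≤ p) (hM : MomentFin σ p) :
    ∃ C > (0:ℝ), ∀ g : ℝ → ℝ, ∀ L : ℝ, 0 ≤ L →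
      (∀ x ∈ Icc (0:ℝ) 1, ∀ t ∈ Icc (0:ℝ) 1, |g t - g x| ≤ L * |t - x|) →
      ∀ n : ℕ, 0 < n →
        LpNorm1 ρ p (fun x => nnOp ρ σ g n x - g x) ≤ C * L / n := by
  set B := 2 ^ p * ((absMoment σ p).toReal + 1) * (ρ.real (Icc 0 1) + 1) / phiK σ 1
  have hB : 0 < B := div_pos (by positivity) hker.2.1
  refine ⟨B ^ (1 / p), Real.rpow_pos_of_pos hB _, fun g L hL hg n hn => ?_⟩
  have hp0 : 0 < p := by linarith
  have hLn : 0 ≤ L / n := by positivity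
  have hint : ∫ x in Icc (0:ℝ) 1, |nnOp ρ σ g n x - g x| ^ p ∂ρ ≤ (L / n) ^ p * B := by
    refine (integral_rpow_abs_nnOp_sub_le hσ hker hM hL hg hp hn).trans ?_
    exact mul_le_mul_of_nonneg_left
      (div_le_div_of_nonneg_right (by gcongr <;> linarith) hker.2.1.le) (by positivity)
  calc LpNorm1 ρ p (fun x => nnOp ρ σ g n x - g x)
      ≤ ((L / n) ^ p * B) ^ (1 / p) :=
        Real.rpow_le_rpow (integral_nonneg fun x => by positivity) hint (by positivity)
    _ = B ^ (1 / p) * L / n := by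
        rw [Real.mul_rpow (by positivity) hB.le, ← Real.rpow_mul hLn, mul_one_div_cancel hp0.ne',
          Real.rpow_one]
        ring
end
end

section
/- Let σ(x) = 1/(1 + e^{−x}) be the logistic function and φ_σ(x) = (σ(x+1) − σ(x−1))/2. Then for every 1 ≤ p < ∞, the p-th discrete absolute moment M_p(φ_σ) = sup_{x∈ℝ} ∑_{k∈ℤ} |x−k|^p φ_σ(x−k) is finite. -/
open MeasureTheory Set Filter Topology

noncomputable section

open Real

/-!
The kernel of the logistic function decays exponentially: `φ_σ(y) ≤ σ(y + 1) ≤ e^{1 + y}` and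
`φ_σ(y) ≤ 1 - σ(y - 1) = σ(1 - y) ≤ e^{1 - y}`. Since the series defining the moment is
`1`-periodic in `x`, it suffices to take `x ∈ [0, 1)`, where `|x - k|^p φ_σ(x - k)` is bounded by
`e² (|k| + 1)^p e^{-|k|}`, a summable function of `k` independent of `x`.
-/

lemma sigmoid_le_exp (x : ℝ) : sigmoid x ≤ exp x := by
  rw [← neg_neg x, ← sigmoid_mul_rexp_neg, neg_neg]
  exact mul_le_of_le_one_left (exp_nonneg x) (sigmoid_le_one _)

lemma phiK_sigmoid_le (y : ℝ) : phiK sigmoid y ≤ exp (1 - |y|) := by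
  have hleft : phiK sigmoid y ≤ exp (y + 1) := by
    have := sigmoid_le_exp (y + 1)
    unfold phiK
    linarith [sigmoid_nonneg (y - 1), sigmoid_nonneg (y + 1)]
  have hright : phiK sigmoid y ≤ exp (1 - y) := by
    have := sigmoid_le_exp (-(y - 1))
    rw [sigmoid_neg, neg_sub] at this
    unfold phiK
    linarith [sigmoid_le_one (y + 1), sigmoid_le_one (y - 1)]
  rcases abs_cases y with ⟨h, -⟩ | ⟨h, -⟩ <;> rw [h]
  · exact hright
  · rwa [sub_neg_eq_add, add_comm]

lemma summable_nat_add_one_rpow_mul_exp_neg (p : ℝ) {c : ℝ} (hc : 0 < c) :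
    Summable fun n : ℕ => ((n : ℝ) + 1) ^ p * exp (-c * n) := by
  set m := ⌈p⌉₊
  have hm : Summable fun n : ℕ => ((n : ℝ) + 1) ^ m * exp (-c * n) := by
    have := ((summable_nat_add_iff 1).2 (summable_pow_mul_exp_neg_nat_mul m hc)).mul_left (exp c)
    refine this.congr fun n => ?_
    push_cast
    rw [mul_left_comm, ← exp_add]
    ring_nf
  refine hm.of_nonneg_of_le (fun n => by positivity) fun n => ?_
  gcongr
  rw [← rpow_natCast]
  exact rpow_le_rpow_of_exponent_le (by linarith [n.cast_nonneg (α := ℝ)]) (Nat.le_ceil p)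

lemma summable_abs_add_one_rpow_mul_exp_neg_abs (p : ℝ) {c : ℝ} (hc : 0 < c) :
    Summable fun k : ℤ => (|(k : ℝ)| + 1) ^ p * exp (-c * |(k : ℝ)|) := by
  rw [summable_int_iff_summable_nat_and_neg]
  constructor <;> simpa using summable_nat_add_one_rpow_mul_exp_neg p hc

lemma tsum_int_sub_eq_tsum_fract_sub {M : Type*} [AddCommMonoid M] [TopologicalSpace M]
    (g : ℝ → M) (x : ℝ) : ∑' k : ℤ, g (x - k) = ∑' k : ℤ, g (Int.fract x - k) := by
  rw [← (Equiv.addRight ⌊x⌋).tsum_eq]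
  refine tsum_congr fun k => congrArg g ?_
  simp only [Equiv.coe_addRight, Int.cast_add, Int.fract]
  ring

lemma abs_sub_rpow_mul_le_of_le_exp {f : ℝ → ℝ} {p a c t : ℝ} (hp : 0 ≤ p) (hc : 0 ≤ c)
    (hf : ∀ y, f y ≤ exp (a - c * |y|)) (ht₀ : 0 ≤ t) (ht₁ : t ≤ 1) (k : ℤ) :
    |t - k| ^ p * f (t - k) ≤ exp (a + c) * ((|(k : ℝ)| + 1) ^ p * exp (-c * |(k : ℝ)|)) := by
  have hupper : |t - k| ≤ |(k : ℝ)| + 1 := by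
    rw [abs_sub_comm]; linarith [abs_sub (k : ℝ) t, abs_of_nonneg ht₀]
  have hlower : |(k : ℝ)| ≤ |t - k| + 1 := by
    linarith [abs_sub_abs_le_abs_sub (k : ℝ) t, abs_sub_comm (k : ℝ) t, abs_of_nonneg ht₀]
  calc |t - k| ^ p * f (t - k)
      ≤ |t - k| ^ p * exp (a - c * |t - k|) := by gcongr; exact hf _
    _ ≤ (|(k : ℝ)| + 1) ^ p * exp (a + c - c * |(k : ℝ)|) := by
        refine mul_le_mul (rpow_le_rpow (abs_nonneg _) hupper hp) (exp_le_exp.2 ?_)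
          (exp_nonneg _) (by positivity)
        nlinarith
    _ = exp (a + c) * ((|(k : ℝ)| + 1) ^ p * exp (-c * |(k : ℝ)|)) := by
        rw [sub_eq_add_neg, exp_add, neg_mul]; ring

theorem iSup_tsum_ofReal_rpow_mul_lt_top_of_le_exp {f : ℝ → ℝ} {p a c : ℝ} (hp : 0 ≤ p)
    (hc : 0 < c) (hf : ∀ y, f y ≤ exp (a - c * |y|)) :
    (⨆ x : ℝ, ∑' k : ℤ, ENNReal.ofReal (|x - k| ^ p * f (x - k))) < ⊤ := by
  have hsum := (summable_abs_add_one_rpow_mul_exp_neg_abs p hc).mul_left (exp (a + c))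
  have hfinite : ∑' k : ℤ, ENNReal.ofReal
      (exp (a + c) * ((|(k : ℝ)| + 1) ^ p * exp (-c * |(k : ℝ)|))) < ⊤ := by
    rw [← ENNReal.ofReal_tsum_of_nonneg (fun k => by positivity) hsum]
    exact ENNReal.ofReal_lt_top
  refine (iSup_le fun x => ?_).trans_lt hfinite
  rw [tsum_int_sub_eq_tsum_fract_sub (fun y => ENNReal.ofReal (|y| ^ p * f y))]
  exact ENNReal.tsum_le_tsum fun k => ENNReal.ofReal_le_ofReal <|
    abs_sub_rpow_mul_le_of_le_exp hp hc.le hf (Int.fract_nonneg x) (Int.fract_lt_one x).le k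

/-- for the logistic function `σ(x) = 1/(1 + e^{−x})`, the `p`-th discrete
absolute moment `M_p(φ_σ) = sup_{x∈ℝ} ∑_{k∈ℤ} |x−k|^p φ_σ(x−k)` is finite for `1 ≤ p < ∞`. -/
theorem statement16 (σ : ℝ → ℝ) (hσ : σ = fun x => 1 / (1 + Real.exp (-x)))
    (p : ℝ) (hp : 1 ≤ p) :
    MomentFin σ p := by
  obtain rfl : σ = sigmoid := hσ.trans (funext fun x => one_div _)
  exact iSup_tsum_ofReal_rpow_mul_lt_top_of_le_exp (by linarith) one_pos
    fun y => (phiK_sigmoid_le y).trans_eq (by rw [one_mul])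
end
end

section
/- Let σ(x) = (e^x − e^{−x})/(e^x + e^{−x}) = tanh(x) and φ_σ(x) = (σ(x+1) − σ(x−1))/2. Then for every δ ∈ (0,1), the ratio [σ(nδ+1) − σ(nδ−1)] / [σ(nδ²+1) − σ(nδ²−1)] = φ_σ(nδ)/φ_σ(nδ²) tends to 0 as n → ∞; equivalently, max{φ_σ(nt−k): t ∈ [0,1]\(k/n−δ, k/n+δ)} / min{φ_σ(nt−k): t ∈ (k/n, k/n+δ²)} → 0 as n → ∞. -/
/-!
Since `tanh a - tanh b = sinh (a - b) / (cosh a * cosh b)`, the kernel of `tanh` is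
`φ(x) = sinh 2 / (cosh (2x) + cosh 2)`, which is even, decreasing in `|x|` and comparable to
`exp (-2|x|)` up to constant factors. Hence `φ(nδ) / φ(nδ²) = O(exp (-2n(δ - δ²)))`, which tends
to `0` for `δ ∈ (0,1)`. In the max/min ratio, the points `t` outside `(k/n - δ, k/n + δ)` satisfy
`|nt - k| ≥ nδ` and those in `(k/n, k/n + δ²)` satisfy `|nt - k| ≤ nδ²`, so by monotonicity in
`|x|` that ratio is at most `φ(nδ) / φ(nδ²)`.
-/

open MeasureTheory Set Filter Topology

noncomputable section

/-- `max{φ_σ(nt−k) : t ∈ [0,1] \ (k/n−δ, k/n+δ)} / min{φ_σ(nt−k) : t ∈ (k/n, k/n+δ²)}`. -/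
def KernelRatio (σ : ℝ → ℝ) (n k : ℕ) (δ : ℝ) : ℝ :=
  sSup ((fun t => phiK σ ((n : ℝ) * t - (k : ℝ))) ''
      (Icc (0:ℝ) 1 \ Ioo ((k : ℝ) / n - δ) ((k : ℝ) / n + δ))) /
    sInf ((fun t => phiK σ ((n : ℝ) * t - (k : ℝ))) ''
      (Ioo ((k : ℝ) / n) ((k : ℝ) / n + δ ^ 2)))

/-- For every `δ ∈ (0,1)`, the max/min kernel ratio tends to `0` as `n → ∞`,
uniformly in `k ∈ {0,…,n}`. -/
def RatioCond (σ : ℝ → ℝ) : Prop :=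
  ∀ δ ∈ Ioo (0:ℝ) 1, ∀ ε > (0:ℝ), ∃ N : ℕ, ∀ n ≥ N, ∀ k ≤ n, KernelRatio σ n k δ < ε

end

namespace Real

theorem tanh_eq_exp_div (x : ℝ) : tanh x = (exp x - exp (-x)) / (exp x + exp (-x)) := by
  rw [tanh_eq_sinh_div_cosh, sinh_eq, cosh_eq]
  field_simp

theorem tanh_sub_tanh (a b : ℝ) : tanh a - tanh b = sinh (a - b) / (cosh a * cosh b) := by
  have := (cosh_pos a).ne'
  have := (cosh_pos b).ne'
  rw [tanh_eq_sinh_div_cosh, tanh_eq_sinh_div_cosh, sinh_sub]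
  field_simp

theorem cosh_add_add_cosh_sub (a b : ℝ) :
    cosh (a + b) + cosh (a - b) = 2 * cosh a * cosh b := by
  rw [cosh_add, cosh_sub]
  ring

theorem exp_abs_le_two_mul_cosh (x : ℝ) : exp |x| ≤ 2 * cosh x := by
  rw [cosh_eq]
  linarith [exp_abs_le x]

theorem cosh_le_exp_abs (x : ℝ) : cosh x ≤ exp |x| := by
  rw [← cosh_abs, cosh_eq]
  linarith [exp_le_exp.2 (neg_le_self (abs_nonneg x))]

end Real

open Real

theorem phiK_tanh (x : ℝ) : phiK tanh x = sinh 2 / (cosh (2 * x) + cosh 2) := by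
  have h := cosh_add_add_cosh_sub (x + 1) (x - 1)
  rw [show x + 1 + (x - 1) = 2 * x by ring, show x + 1 - (x - 1) = 2 by ring] at h
  rw [phiK, tanh_sub_tanh, show x + 1 - (x - 1) = 2 by ring, h]
  ring

theorem phiK_tanh_pos (x : ℝ) : 0 < phiK tanh x := by
  rw [phiK_tanh]
  exact div_pos (sinh_pos_iff.2 two_pos) (add_pos (cosh_pos _) (cosh_pos _))

theorem phiK_tanh_le_of_abs_le {a b : ℝ} (h : |a| ≤ |b|) : phiK tanh b ≤ phiK tanh a := by
  rw [phiK_tanh, phiK_tanh]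
  have : cosh (2 * a) ≤ cosh (2 * b) := by
    rw [cosh_le_cosh, abs_mul, abs_mul]
    gcongr
  have := sinh_pos_iff.2 (two_pos : (0 : ℝ) < 2)
  gcongr

theorem phiK_tanh_div_le (a b : ℝ) :
    phiK tanh a / phiK tanh b ≤ 2 * (1 + cosh 2) * exp (2 * (|b| - |a|)) := by
  have hnum : cosh (2 * b) + cosh 2 ≤ (1 + cosh 2) * exp (2 * |b|) := by
    have h1 := cosh_le_exp_abs (2 * b)
    have h2 : 1 ≤ exp (2 * |b|) := one_le_exp (by positivity)
    rw [abs_mul, abs_two] at h1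
    nlinarith [cosh_pos 2]
  have hden : exp (2 * |a|) / 2 ≤ cosh (2 * a) + cosh 2 := by
    have h1 := exp_abs_le_two_mul_cosh (2 * a)
    rw [abs_mul, abs_two] at h1
    linarith [cosh_pos 2]
  have hsinh := sinh_pos_iff.2 (two_pos : (0 : ℝ) < 2)
  calc phiK tanh a / phiK tanh b
      = (cosh (2 * b) + cosh 2) / (cosh (2 * a) + cosh 2) := by
        rw [phiK_tanh, phiK_tanh, div_div_div_cancel_left' _ _ hsinh.ne']
    _ ≤ (1 + cosh 2) * exp (2 * |b|) / (exp (2 * |a|) / 2) := by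
        gcongr
    _ = 2 * (1 + cosh 2) * exp (2 * (|b| - |a|)) := by
        rw [mul_sub, exp_sub]
        field_simp

theorem tendsto_phiK_tanh_div {δ : ℝ} (hδ : δ ∈ Ioo (0 : ℝ) 1) :
    Tendsto (fun n : ℕ => phiK tanh (n * δ) / phiK tanh (n * δ ^ 2)) atTop (𝓝 0) := by
  have hr : exp (2 * (δ ^ 2 - δ)) < 1 := exp_lt_one_iff.2 (by nlinarith [hδ.1, hδ.2])
  have hgeom :
      Tendsto (fun n : ℕ => 2 * (1 + cosh 2) * exp (2 * (δ ^ 2 - δ)) ^ n) atTop (𝓝 0) := by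
    simpa using (tendsto_pow_atTop_nhds_zero_of_lt_one (exp_pos _).le hr).const_mul
      (2 * (1 + cosh 2))
  refine squeeze_zero (fun n => (div_pos (phiK_tanh_pos _) (phiK_tanh_pos _)).le)
    (fun n => ?_) hgeom
  have hδ0 := hδ.1.le
  calc phiK tanh (n * δ) / phiK tanh (n * δ ^ 2)
      ≤ 2 * (1 + cosh 2) * exp (2 * (|n * δ ^ 2| - |n * δ|)) := phiK_tanh_div_le _ _
    _ = 2 * (1 + cosh 2) * exp (2 * (δ ^ 2 - δ)) ^ n := by
        rw [abs_of_nonneg (by positivity), abs_of_nonneg (by positivity), ← exp_nat_mul]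
        ring_nf

theorem sSup_phiK_le {σ : ℝ → ℝ} (hpos : ∀ x, 0 < phiK σ x)
    (hmono : ∀ a b, |a| ≤ |b| → phiK σ b ≤ phiK σ a) {n : ℕ} (hn : 0 < n) (k : ℕ) {δ : ℝ}
    (hδ : 0 < δ) :
    sSup ((fun t => phiK σ ((n : ℝ) * t - k)) ''
      (Icc (0:ℝ) 1 \ Ioo ((k : ℝ) / n - δ) ((k : ℝ) / n + δ))) ≤ phiK σ (n * δ) := by
  have hn : (0 : ℝ) < n := Nat.cast_pos.2 hn
  refine Real.sSup_le ?_ (hpos _).le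
  rintro _ ⟨t, ⟨-, ht⟩, rfl⟩
  apply hmono
  rw [abs_of_nonneg (by positivity), le_abs]
  have hk : (n : ℝ) * (k / n) = k := mul_div_cancel₀ _ hn.ne'
  rw [mem_Ioo, not_and_or, not_lt, not_lt] at ht
  rcases ht with ht | ht
  · have := mul_le_mul_of_nonneg_left ht hn.le
    rw [mul_sub, hk] at this
    right; linarith
  · have := mul_le_mul_of_nonneg_left ht hn.le
    rw [mul_add, hk] at this
    left; linarith

theorem phiK_le_sInf {σ : ℝ → ℝ} (hmono : ∀ a b, |a| ≤ |b| → phiK σ b ≤ phiK σ a)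
    {n : ℕ} (hn : 0 < n) (k : ℕ) {δ : ℝ} (hδ : 0 < δ) :
    phiK σ (n * δ ^ 2) ≤ sInf ((fun t => phiK σ ((n : ℝ) * t - k)) ''
      (Ioo ((k : ℝ) / n) ((k : ℝ) / n + δ ^ 2))) := by
  have hn : (0 : ℝ) < n := Nat.cast_pos.2 hn
  refine le_csInf ((nonempty_Ioo.2 (by simpa using pow_pos hδ 2)).image _) ?_
  rintro _ ⟨t, ⟨ht₁, ht₂⟩, rfl⟩
  apply hmono
  have hk : (n : ℝ) * (k / n) = k := mul_div_cancel₀ _ hn.ne'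
  have hlo := mul_lt_mul_of_pos_left ht₁ hn
  have hhi := mul_lt_mul_of_pos_left ht₂ hn
  rw [hk] at hlo
  rw [mul_add, hk] at hhi
  rw [abs_of_pos (by linarith), abs_of_nonneg (by positivity)]
  linarith

theorem kernelRatio_le {σ : ℝ → ℝ} (hpos : ∀ x, 0 < phiK σ x)
    (hmono : ∀ a b, |a| ≤ |b| → phiK σ b ≤ phiK σ a) {n : ℕ} (hn : 0 < n) (k : ℕ) {δ : ℝ}
    (hδ : 0 < δ) :
    KernelRatio σ n k δ ≤ phiK σ (n * δ) / phiK σ (n * δ ^ 2) :=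
  div_le_div₀ (hpos _).le (sSup_phiK_le hpos hmono hn k hδ) (hpos _)
    (phiK_le_sInf hmono hn k hδ)

theorem ratioCond_of_tendsto {σ : ℝ → ℝ} (hpos : ∀ x, 0 < phiK σ x)
    (hmono : ∀ a b, |a| ≤ |b| → phiK σ b ≤ phiK σ a)
    (h : ∀ δ ∈ Ioo (0:ℝ) 1,
      Tendsto (fun n : ℕ => phiK σ (n * δ) / phiK σ (n * δ ^ 2)) atTop (𝓝 0)) :
    RatioCond σ := by
  intro δ hδ ε hε
  obtain ⟨N, hN⟩ := eventually_atTop.1 ((h δ hδ).eventually (gt_mem_nhds hε))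
  refine ⟨N + 1, fun n hn k _ => ?_⟩
  exact (kernelRatio_le hpos hmono (by omega) k hδ.1).trans_lt (hN n (by omega))

/-- for the hyperbolic tangent `σ(x) = (eˣ − e⁻ˣ)/(eˣ + e⁻ˣ)` and every
`δ ∈ (0,1)`, `φ_σ(nδ)/φ_σ(nδ²) = [σ(nδ+1) − σ(nδ−1)]/[σ(nδ²+1) − σ(nδ²−1)] → 0`
as `n → ∞`; equivalently, the max/min kernel ratio tends to `0`. -/
theorem statement17 (σ : ℝ → ℝ)
    (hσ : σ = fun x => (Real.exp x - Real.exp (-x)) / (Real.exp x + Real.exp (-x))) :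
    (∀ δ ∈ Ioo (0:ℝ) 1,
      Tendsto (fun n : ℕ =>
        phiK σ ((n : ℝ) * δ) / phiK σ ((n : ℝ) * δ ^ 2)) atTop (nhds 0)) ∧
    RatioCond σ := by
  obtain rfl : σ = tanh := hσ.trans (funext fun x => (tanh_eq_exp_div x).symm)
  have hlim : ∀ δ ∈ Ioo (0:ℝ) 1,
      Tendsto (fun n : ℕ => phiK tanh (n * δ) / phiK tanh (n * δ ^ 2)) atTop (𝓝 0) :=
    fun _ => tendsto_phiK_tanh_div
  exact ⟨hlim, ratioCond_of_tendsto phiK_tanh_pos (fun _ _ => phiK_tanh_le_of_abs_le) hlim⟩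
end

section
/- Let σ(x) = tanh(x) and φ_σ(x) = (σ(x+1) − σ(x−1))/2 = (1/2)(tanh(x+1) − tanh(x−1)). Then for every 1 ≤ p < ∞, the p-th discrete absolute moment M_p(φ_σ) = sup_{x∈ℝ} ∑_{k∈ℤ} |x−k|^p φ_σ(x−k) is finite. -/
open MeasureTheory Set Filter Topology

noncomputable section

/-!
The kernel of `tanh` decays like `e^{2 - 2|y|}`, and `|y|^p ≤ p^p e^{|y|}`, so the summands are
dominated by `C e^{-|x - k|}`. Comparing with `k ↦ e^{1/2} e^{-|round x - k|}`, a shift of the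
summable sequence `j ↦ e^{-|j|}`, bounds the series uniformly in `x`.
-/

open Real

lemma summable_exp_neg_abs_int : Summable fun j : ℤ => exp (-|(j : ℝ)|) :=
  Summable.of_nat_of_neg (by simpa using summable_exp_neg_nat)
    (by simpa using summable_exp_neg_nat)

lemma exp_neg_abs_sub_le_exp_neg_abs_round_sub (x : ℝ) (k : ℤ) :
    exp (-|x - k|) ≤ exp (1 / 2) * exp (-|((round x - k : ℤ) : ℝ)|) := by
  rw [← exp_add, exp_le_exp, Int.cast_sub]
  have hround := abs_sub_round x
  have htri := abs_sub_le (round x : ℝ) x k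
  rw [abs_sub_comm (round x : ℝ) x] at htri
  linarith

lemma tsum_ofReal_exp_neg_abs_sub_int_le (x : ℝ) :
    ∑' k : ℤ, ENNReal.ofReal (exp (-|x - k|))
      ≤ ENNReal.ofReal (exp (1 / 2)) * ∑' j : ℤ, ENNReal.ofReal (exp (-|(j : ℝ)|)) :=
  calc ∑' k : ℤ, ENNReal.ofReal (exp (-|x - k|))
      ≤ ∑' k : ℤ, ENNReal.ofReal (exp (1 / 2)) *
          ENNReal.ofReal (exp (-|((round x - k : ℤ) : ℝ)|)) :=
        ENNReal.tsum_le_tsum fun k => (ENNReal.ofReal_le_ofReal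
          (exp_neg_abs_sub_le_exp_neg_abs_round_sub x k)).trans_eq
          (ENNReal.ofReal_mul (exp_pos _).le)
    _ = ENNReal.ofReal (exp (1 / 2)) * ∑' j : ℤ, ENNReal.ofReal (exp (-|(j : ℝ)|)) := by
        rw [ENNReal.tsum_mul_left]
        exact congrArg _ <|
          (Equiv.subLeft (round x)).tsum_eq fun j : ℤ => ENNReal.ofReal (exp (-|(j : ℝ)|))

lemma momentFin_of_le_mul_exp_neg_abs {σ : ℝ → ℝ} {p : ℝ} (C : ℝ)
    (h : ∀ y, |y| ^ p * phiK σ y ≤ C * exp (-|y|)) : MomentFin σ p := by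
  have hterm (x : ℝ) (k : ℤ) :
      ENNReal.ofReal (|x - k| ^ p * phiK σ (x - k))
        ≤ ENNReal.ofReal C * ENNReal.ofReal (exp (-|x - k|)) :=
    (ENNReal.ofReal_le_ofReal (h _)).trans_eq (ENNReal.ofReal_mul' (exp_pos _).le)
  have hsum := summable_exp_neg_abs_int.tsum_ofReal_ne_top
  calc _ ≤ ENNReal.ofReal C * (ENNReal.ofReal (exp (1 / 2)) *
          ∑' j : ℤ, ENNReal.ofReal (exp (-|(j : ℝ)|))) :=
        iSup_le fun x => (ENNReal.tsum_le_tsum (hterm x)).trans <| by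
          rw [ENNReal.tsum_mul_left]
          exact mul_le_mul_right (tsum_ofReal_exp_neg_abs_sub_int_le x) _
    _ < ⊤ := by finiteness

lemma one_sub_tanh_le (t : ℝ) : 1 - tanh t ≤ 2 * exp (-2 * t) := by
  have hden : 0 < exp t + exp (-t) := by positivity
  have : 1 - tanh t = 2 * exp (-t) / (exp t + exp (-t)) := by
    rw [tanh_eq]; field_simp; ring
  rw [this, div_le_iff₀ hden]
  calc 2 * exp (-t) = 2 * exp (-2 * t) * exp t := by
        rw [mul_assoc, ← exp_add]; ring_nf
    _ ≤ 2 * exp (-2 * t) * (exp t + exp (-t)) := by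
        gcongr; linarith [exp_pos (-t)]

lemma phiK_tanh_neg (y : ℝ) : phiK tanh (-y) = phiK tanh y := by
  unfold phiK
  rw [show -y + 1 = -(y - 1) by ring, show -y - 1 = -(y + 1) by ring, tanh_neg, tanh_neg]
  ring

lemma phiK_tanh_le (y : ℝ) : phiK tanh y ≤ exp (2 - 2 * y) := by
  have h1 := tanh_lt_one (y + 1)
  have h2 := one_sub_tanh_le (y - 1)
  rw [show -2 * (y - 1) = 2 - 2 * y by ring] at h2
  unfold phiK
  linarith

lemma phiK_tanh_le_exp_abs (y : ℝ) : phiK tanh y ≤ exp (2 - 2 * |y|) := by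
  rcases abs_choice y with h | h <;> rw [h]
  · exact phiK_tanh_le y
  · simpa [phiK_tanh_neg] using phiK_tanh_le (-y)

lemma rpow_abs_mul_phiK_tanh_le {p : ℝ} (hp : 0 ≤ p) (y : ℝ) :
    |y| ^ p * phiK tanh y ≤ p ^ p * exp 2 * exp (-|y|) :=
  calc |y| ^ p * phiK tanh y ≤ |y| ^ p * exp (2 - 2 * |y|) := by
        gcongr; exact phiK_tanh_le_exp_abs y
    _ ≤ p ^ p * exp |y| * exp (2 - 2 * |y|) := by
        gcongr; simpa using ProbabilityTheory.rpow_abs_le_mul_exp_abs y hp one_ne_zero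
    _ = p ^ p * exp 2 * exp (-|y|) := by
        rw [mul_assoc, ← exp_add, mul_assoc, ← exp_add]; ring_nf

/-- for `σ = tanh`, so `φ_σ(x) = (tanh(x+1) − tanh(x−1))/2`, the `p`-th
discrete absolute moment `M_p(φ_σ)` is finite for every `1 ≤ p < ∞`. -/
theorem statement18 (σ : ℝ → ℝ) (hσ : σ = Real.tanh)
    (p : ℝ) (hp : 1 ≤ p) :
    MomentFin σ p := by
  subst hσ
  exact momentFin_of_le_mul_exp_neg_abs _ (rpow_abs_mul_phiK_tanh_le (by linarith))

end
end
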